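/- Fix ρ ∈ [0,1], K ≥ 1, real numbers μ_{i0}, σ_{i0}², and suppose n real numbers are partitioned into K groups, where group i consists of values X^i_1, …, X^i_{T_i} with T_i ≥ 1 and ∑_{i=1}^K T_i = n. Let μ̂_i and σ̂_i² be the empirical mean and empirical variance of group i, let μ̂ and σ̂² be the empirical mean and empirical variance of all n values pooled together, and set MV̂^ρ := (1−ρ)σ̂² − ρμ̂. Then MV̂^ρ − ((1−ρ)σ_{i0}² − ρμ_{i0}) ≤ (1/n)·∑_{i=1}^K T_i·Δ̂_i + (1/n²)·∑_{i=1}^K ∑_{h ≠ i} T_i·T_h·Γ̂_{i,h}², where Δ̂_i := (1−ρ)(σ̂_i² − σ_{i0}²) − ρ(μ̂_i − μ_{i0}) and Γ̂_{i,h} := |μ̂_i − μ̂_h|. -/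

import Mathlib

/-!
By the law of total variance, the pooled empirical variance is the `T`-weighted average of the
group variances plus the between-group variance `(1/n) ∑ᵢ Tᵢ (μ̂ᵢ - μ̂)²`, while the pooled mean
is the weighted average of the group means. Since `MV̂^ρ` is affine in the pair (mean, variance),
the regret is exactly `(1/n) ∑ᵢ Tᵢ Δ̂ᵢ` plus `(1 - ρ)` times the between-group variance. The latter
equals `(1/(2n²)) ∑ᵢ ∑ₕ Tᵢ Tₕ Γ̂ᵢₕ²`, and `(1 - ρ)/2 ≤ 1`.
-/

open Finset

section Empirical

variable {ι : Type*} [Fintype ι]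

noncomputable def empiricalMean (x : ι → ℝ) : ℝ :=
  (Fintype.card ι : ℝ)⁻¹ * ∑ t, x t

noncomputable def empiricalVariance (x : ι → ℝ) : ℝ :=
  (Fintype.card ι : ℝ)⁻¹ * ∑ t, (x t - empiricalMean x) ^ 2

theorem card_mul_inv_mul_sum (f : ι → ℝ) :
    (Fintype.card ι : ℝ) * ((Fintype.card ι : ℝ)⁻¹ * ∑ t, f t) = ∑ t, f t := by
  rcases isEmpty_or_nonempty ι with hι | hι
  · simp
  · rw [mul_inv_cancel_left₀ (by positivity)]

theorem card_mul_empiricalMean (x : ι → ℝ) :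
    Fintype.card ι * empiricalMean x = ∑ t, x t :=
  card_mul_inv_mul_sum x

theorem card_mul_empiricalVariance (x : ι → ℝ) :
    Fintype.card ι * empiricalVariance x = ∑ t, (x t - empiricalMean x) ^ 2 :=
  card_mul_inv_mul_sum _

theorem sum_sub_empiricalMean (x : ι → ℝ) : ∑ t, (x t - empiricalMean x) = 0 := by
  rw [sum_sub_distrib, ← card_mul_empiricalMean, sum_const, card_univ, nsmul_eq_mul, sub_self]

theorem sum_sub_sq_eq_card_mul (x : ι → ℝ) (c : ℝ) :
    ∑ t, (x t - c) ^ 2 =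
      Fintype.card ι * (empiricalVariance x + (empiricalMean x - c) ^ 2) := by
  calc ∑ t, (x t - c) ^ 2
      = ∑ t, ((x t - empiricalMean x) ^ 2 + 2 * (empiricalMean x - c) * (x t - empiricalMean x)
          + (empiricalMean x - c) ^ 2) := sum_congr rfl fun t _ => by ring
    _ = _ := by
      rw [sum_add_distrib, sum_add_distrib, ← mul_sum, sum_sub_empiricalMean,
        ← card_mul_empiricalVariance, sum_const, card_univ, nsmul_eq_mul]
      ring

end Empirical

theorem sum_sum_mul_mul_sub_sq {ι : Type*} (s : Finset ι) (w a : ι → ℝ) {c : ℝ}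
    (hc : (∑ i ∈ s, w i) * c = ∑ i ∈ s, w i * a i) :
    ∑ i ∈ s, ∑ j ∈ s, w i * w j * (a i - a j) ^ 2 =
      2 * (∑ i ∈ s, w i) * ∑ i ∈ s, w i * (a i - c) ^ 2 := by
  have h0 : ∑ i ∈ s, w i * (a i - c) = 0 := by
    simp only [mul_sub, sum_sub_distrib, ← sum_mul, hc, sub_self]
  calc ∑ i ∈ s, ∑ j ∈ s, w i * w j * (a i - a j) ^ 2
      = ∑ i ∈ s, ∑ j ∈ s, (w i * (a i - c) ^ 2 * w j + w i * (w j * (a j - c) ^ 2)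
          - 2 * (w i * (a i - c)) * (w j * (a j - c))) :=
        sum_congr rfl fun i _ => sum_congr rfl fun j _ => by ring
    _ = (∑ i ∈ s, w i * (a i - c) ^ 2) * ∑ i ∈ s, w i
          + (∑ i ∈ s, w i) * ∑ i ∈ s, w i * (a i - c) ^ 2
          - 2 * (∑ i ∈ s, w i * (a i - c)) * ∑ i ∈ s, w i * (a i - c) := by
        simp only [sum_sub_distrib, sum_add_distrib, ← mul_sum, ← sum_mul]
    _ = _ := by rw [h0]; ring

section Pooled

variable {ι : Type*} [Fintype ι] {κ : ι → Type*} [∀ i, Fintype (κ i)]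

theorem card_sigma_mul_empiricalMean_uncurry (X : (i : ι) → κ i → ℝ) :
    Fintype.card (Σ i, κ i) * empiricalMean (Sigma.uncurry X) =
      ∑ i, Fintype.card (κ i) * empiricalMean (X i) := by
  simp only [card_mul_empiricalMean, Fintype.sum_sigma, Sigma.uncurry]

theorem card_sigma_mul_empiricalVariance_uncurry (X : (i : ι) → κ i → ℝ) :
    Fintype.card (Σ i, κ i) * empiricalVariance (Sigma.uncurry X) =
      ∑ i, Fintype.card (κ i) * (empiricalVariance (X i) +
        (empiricalMean (X i) - empiricalMean (Sigma.uncurry X)) ^ 2) := by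
  rw [card_mul_empiricalVariance, Fintype.sum_sigma]
  exact sum_congr rfl fun i _ => sum_sub_sq_eq_card_mul (X i) _

theorem card_sigma_mul_meanVariance_sub (ρ μ0 σ0 : ℝ) (X : (i : ι) → κ i → ℝ) :
    Fintype.card (Σ i, κ i) * (((1 - ρ) * empiricalVariance (Sigma.uncurry X) -
        ρ * empiricalMean (Sigma.uncurry X)) - ((1 - ρ) * σ0 - ρ * μ0)) =
      ∑ i, Fintype.card (κ i) *
          ((1 - ρ) * (empiricalVariance (X i) - σ0) - ρ * (empiricalMean (X i) - μ0)) +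
        (1 - ρ) * ∑ i, Fintype.card (κ i) *
          (empiricalMean (X i) - empiricalMean (Sigma.uncurry X)) ^ 2 := by
  have hcard : (Fintype.card (Σ i, κ i) : ℝ) = ∑ i, (Fintype.card (κ i) : ℝ) := by
    simp [Fintype.card_sigma]
  have hV := card_sigma_mul_empiricalVariance_uncurry X
  have hμ := card_sigma_mul_empiricalMean_uncurry X
  simp only [mul_add, sum_add_distrib] at hV
  simp only [mul_sub, sum_sub_distrib, ← sum_mul, ← mul_sum, mul_left_comm _ (1 - ρ),
    mul_left_comm _ ρ, ← hcard]
  linear_combination (1 - ρ) * hV - ρ * hμ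

theorem meanVariance_regret_le [DecidableEq ι] [Nonempty (Σ i, κ i)] {ρ : ℝ}
    (hρ : ρ ∈ Set.Icc (0 : ℝ) 1) (μ0 σ0 : ℝ) (X : (i : ι) → κ i → ℝ) :
    ((1 - ρ) * empiricalVariance (Sigma.uncurry X) - ρ * empiricalMean (Sigma.uncurry X)) -
        ((1 - ρ) * σ0 - ρ * μ0) ≤
      (Fintype.card (Σ i, κ i) : ℝ)⁻¹ * ∑ i, Fintype.card (κ i) *
          ((1 - ρ) * (empiricalVariance (X i) - σ0) - ρ * (empiricalMean (X i) - μ0)) +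
        ((Fintype.card (Σ i, κ i) : ℝ) ^ 2)⁻¹ * ∑ i, ∑ h ∈ univ \ {i},
          (Fintype.card (κ i) : ℝ) * Fintype.card (κ h) *
            |empiricalMean (X i) - empiricalMean (X h)| ^ 2 := by
  set N : ℝ := ((Fintype.card (Σ i, κ i) : ℕ) : ℝ)
  set B := ∑ i, Fintype.card (κ i) *
    (empiricalMean (X i) - empiricalMean (Sigma.uncurry X)) ^ 2
  have hN : 0 < N := by simp only [N]; exact_mod_cast Fintype.card_pos
  have hB : 0 ≤ B := by positivity
  have hpair : ∑ i, ∑ h ∈ univ \ {i}, (Fintype.card (κ i) : ℝ) * Fintype.card (κ h) *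
      |empiricalMean (X i) - empiricalMean (X h)| ^ 2 = 2 * N * B := by
    have hcard : N = ∑ i, (Fintype.card (κ i) : ℝ) := by simp [N, Fintype.card_sigma]
    have hμ : N * empiricalMean (Sigma.uncurry X) =
        ∑ i, (Fintype.card (κ i) : ℝ) * empiricalMean (X i) :=
      card_sigma_mul_empiricalMean_uncurry X
    rw [hcard] at hμ ⊢
    rw [← sum_sum_mul_mul_sub_sq _ _ _ hμ]
    refine sum_congr rfl fun i _ => ?_
    rw [sdiff_singleton_eq_erase, sum_erase _ (by simp)]
    simp only [sq_abs]
  have hsplit := card_sigma_mul_meanVariance_sub ρ μ0 σ0 X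
  rw [hpair, ← inv_mul_cancel_left₀ hN.ne' (_ - _), hsplit, mul_add]
  gcongr _ + ?_
  rw [show (N ^ 2)⁻¹ * (2 * N * B) = N⁻¹ * (2 * B) by field_simp]
  gcongr
  nlinarith [hρ.1]

end Pooled

/-- Pathwise regret decomposition (Eq. (7) of Sani, Lazaric, Munos (2012)):
a deterministic inequality for `n` real numbers partitioned into `K` groups. -/
theorem regret_decomposition (K : ℕ) (hK : 1 ≤ K) (ρ : ℝ) (hρ : ρ ∈ Set.Icc (0 : ℝ) 1)
    (μ0 σ0 : ℝ) (T : Fin K → ℕ) (hT : ∀ i, 1 ≤ T i) (n : ℕ) (hn : ∑ i, T i = n)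
    (X : (i : Fin K) → Fin (T i) → ℝ) :
    -- group empirical means and variances
    (fun (muHat : Fin K → ℝ) (sigmaHat2 : Fin K → ℝ) (muPool : ℝ) (sigmaPool2 : ℝ) =>
      ((1 - ρ) * sigmaPool2 - ρ * muPool) - ((1 - ρ) * σ0 - ρ * μ0) ≤
        (n : ℝ)⁻¹ * ∑ i, (T i : ℝ) *
            ((1 - ρ) * (sigmaHat2 i - σ0) - ρ * (muHat i - μ0)) +
          ((n : ℝ) ^ 2)⁻¹ * ∑ i, ∑ h ∈ univ \ {i},
            (T i : ℝ) * (T h : ℝ) * |muHat i - muHat h| ^ 2)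
      (fun i => (T i : ℝ)⁻¹ * ∑ t, X i t)
      (fun i => (T i : ℝ)⁻¹ * ∑ t, (X i t - (T i : ℝ)⁻¹ * ∑ s, X i s) ^ 2)
      ((n : ℝ)⁻¹ * ∑ i, ∑ t, X i t)
      ((n : ℝ)⁻¹ * ∑ i, ∑ t, (X i t - (n : ℝ)⁻¹ * ∑ j, ∑ s, X j s) ^ 2) := by
  subst hn
  have : Nonempty (Σ i, Fin (T i)) := ⟨⟨⟨0, hK⟩, ⟨0, hT _⟩⟩⟩
  simpa only [empiricalMean, empiricalVariance, Fintype.card_fin, Fintype.card_sigma,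
    Fintype.sum_sigma, Sigma.uncurry] using meanVariance_regret_le hρ μ0 σ0 X
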